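/- The price of fairness of Seat Arrangement is unbounded: for every real c > 0 there exists an instance of Seat Arrangement with four agents, nonnegative preferences, and seat graph equal to the disjoint union of two edges, such that every maximin arrangement π_f satisfies sw(π_f) > 0 and every maximum arrangement π* satisfies sw(π*) > c · sw(π_f). -/

import Mathlib

open scoped Classical

noncomputable section

namespace SeatArrangement

variable {P V : Type*}

/-- The utility of agent `p` under arrangement `π`:
the sum, over the seat-graph neighbors `v` of `π p`, of `p`'s preference for the agent seated
at `v`. -/
def utility [Fintype V] (G : SimpleGraph V) (f : P → P → ℝ) (π : P ≃ V) (p : P) : ℝ :=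
  ∑ v : V, if G.Adj (π p) v then f p (π.symm v) else 0

/-- The social welfare of an arrangement: the sum of the utilities of all agents. -/
def sw [Fintype P] [Fintype V] (G : SimpleGraph V) (f : P → P → ℝ) (π : P ≃ V) : ℝ :=
  ∑ p : P, utility G f π p

/-- The `(p,q)`-swap arrangement of `π`. -/
def swapArr (π : P ≃ V) (p q : P) : P ≃ V := (Equiv.swap p q).trans π

/-- `{p, q}` is a blocking pair for `π`: both agents strictly improve by swapping seats. -/
def blocking [Fintype V] (G : SimpleGraph V) (f : P → P → ℝ) (π : P ≃ V) (p q : P) : Prop :=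
  p ≠ q ∧ utility G f π p < utility G f (swapArr π p q) p
        ∧ utility G f π q < utility G f (swapArr π p q) q

/-- An arrangement is stable if it has no blocking pair. -/
def stable [Fintype V] (G : SimpleGraph V) (f : P → P → ℝ) (π : P ≃ V) : Prop :=
  ∀ p q : P, ¬ blocking G f π p q

/-- An arrangement is envy-free if no agent would strictly improve by taking
another agent's seat (via a swap). -/
def envyFree [Fintype V] (G : SimpleGraph V) (f : P → P → ℝ) (π : P ≃ V) : Prop :=
  ∀ p q : P, p ≠ q → utility G f (swapArr π p q) p ≤ utility G f π p

/-- The least utility of an agent under `π` (for a finite nonempty set of agents, the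
infimum of the range of utilities is the minimum utility). -/
def minUtil [Fintype V] (G : SimpleGraph V) (f : P → P → ℝ) (π : P ≃ V) : ℝ :=
  sInf (Set.range (utility G f π))

/-- A maximin arrangement maximizes the least utility of an agent. -/
def maximin [Fintype V] (G : SimpleGraph V) (f : P → P → ℝ) (πf : P ≃ V) : Prop :=
  ∀ π : P ≃ V, minUtil G f π ≤ minUtil G f πf

/-- A maximum arrangement maximizes the social welfare. -/
def maximum [Fintype P] [Fintype V] (G : SimpleGraph V) (f : P → P → ℝ) (πm : P ≃ V) : Prop :=
  ∀ π : P ≃ V, sw G f π ≤ sw G f πm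

end SeatArrangement

open SeatArrangement

/-- The seat graph that is the disjoint union of the two edges `{0,1}` and `{2,3}`. -/
def twoEdges : SimpleGraph (Fin 4) where
  Adj i j := (i = 0 ∧ j = 1) ∨ (i = 1 ∧ j = 0) ∨ (i = 2 ∧ j = 3) ∨ (i = 3 ∧ j = 2)
  symm := by
    constructor
    rintro i j (⟨h1, h2⟩ | ⟨h1, h2⟩ | ⟨h1, h2⟩ | ⟨h1, h2⟩) <;> subst h1 <;> subst h2 <;> simp
  loopless := by
    constructor
    rintro i (⟨h1, h2⟩ | ⟨h1, h2⟩ | ⟨h1, h2⟩ | ⟨h1, h2⟩) <;> subst h1 <;> exact absurd h2 (by decide)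

/-! Take `f` with `f 0 1 = f 1 0 = M`, `f 2 3 = f 3 2 = 0` and value `1` on every pair across
`{0, 1}` and `{2, 3}`. Seating the cross pairs together gives everyone utility `1`, so a maximin
arrangement gives everyone utility at least `1`; hence `2` and `3` are not neighbours, every
pair is a cross pair and the welfare is `4`. Seating `0` next to `1` has welfare `2 M`. -/

namespace SeatArrangement

variable {P V : Type*} [Fintype V] {G : SimpleGraph V} {f : P → P → ℝ}

theorem le_minUtil_iff [Nonempty P] {π : P ≃ V} {a : ℝ} :
    a ≤ minUtil G f π ↔ ∀ p, a ≤ utility G f π p := by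
  have : Finite P := .of_equiv V π.symm
  exact le_ciInf_iff (Set.finite_range _).bddBelow

theorem maximin.le_utility [Nonempty P] {πf π : P ≃ V} (hπf : maximin G f πf) {a : ℝ}
    (h : ∀ p, a ≤ utility G f π p) (p : P) : a ≤ utility G f πf p :=
  le_minUtil_iff.1 ((le_minUtil_iff.2 h).trans (hπf π)) p

end SeatArrangement

def mate : Fin 4 → Fin 4 := ![1, 0, 3, 2]

theorem twoEdges_adj_iff {i j : Fin 4} : twoEdges.Adj i j ↔ j = mate i := by
  fin_cases i <;> fin_cases j <;> simp [twoEdges, mate]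

def partner (π : Fin 4 ≃ Fin 4) (p : Fin 4) : Fin 4 := π.symm (mate (π p))

theorem utility_twoEdges (f : Fin 4 → Fin 4 → ℝ) (π : Fin 4 ≃ Fin 4) (p : Fin 4) :
    utility twoEdges f π p = f p (partner π p) := by
  simp [utility, twoEdges_adj_iff, partner]

theorem lt_two_iff_two_le_partner {π : Fin 4 ≃ Fin 4} (h : partner π 2 ≠ 3) (p : Fin 4) :
    p < 2 ↔ 2 ≤ partner π p := by
  revert π p
  decide

def pofPrefs (M : ℝ) : Fin 4 → Fin 4 → ℝ := !![0, M, 1, 1; M, 0, 1, 1; 1, 1, 0, 0; 1, 1, 0, 0]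

theorem pofPrefs_nonneg {M : ℝ} (hM : 0 ≤ M) (p q : Fin 4) : 0 ≤ pofPrefs M p q := by
  fin_cases p <;> fin_cases q <;> simp [pofPrefs, hM]

theorem pofPrefs_eq_one (M : ℝ) {p q : Fin 4} (h : p < 2 ↔ 2 ≤ q) : pofPrefs M p q = 1 := by
  fin_cases p <;> fin_cases q <;> simp_all [pofPrefs]

theorem utility_pofPrefs_eq_one (M : ℝ) {π : Fin 4 ≃ Fin 4} (h : partner π 2 ≠ 3) (p : Fin 4) :
    utility twoEdges (pofPrefs M) π p = 1 := by
  rw [utility_twoEdges, pofPrefs_eq_one M (lt_two_iff_two_le_partner h p)]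

theorem sw_pofPrefs_eq_four (M : ℝ) {π : Fin 4 ≃ Fin 4} (h : partner π 2 ≠ 3) :
    sw twoEdges (pofPrefs M) π = 4 := by
  simp [sw, utility_pofPrefs_eq_one M h]

theorem partner_two_ne_three_of_one_le_utility {M : ℝ} {π : Fin 4 ≃ Fin 4}
    (h : 1 ≤ utility twoEdges (pofPrefs M) π 2) : partner π 2 ≠ 3 := by
  intro h23
  have h0 : pofPrefs M 2 3 = 0 := by simp [pofPrefs]
  rw [utility_twoEdges, h23, h0] at h
  norm_num at h

theorem sw_pofPrefs_refl (M : ℝ) : sw twoEdges (pofPrefs M) (Equiv.refl _) = 2 * M := by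
  simp only [sw, Fin.sum_univ_four, utility_twoEdges]
  simp [partner, mate, pofPrefs, two_mul]

theorem pof_unbounded :
    ∀ c : ℝ, 0 < c → ∃ f : Fin 4 → Fin 4 → ℝ,
      (∀ p q : Fin 4, p ≠ q → 0 ≤ f p q) ∧
      (∀ πf : Fin 4 ≃ Fin 4, maximin twoEdges f πf →
        0 < sw twoEdges f πf ∧
        ∀ πm : Fin 4 ≃ Fin 4, maximum twoEdges f πm →
          c * sw twoEdges f πf < sw twoEdges f πm) := by
  intro c hc
  refine ⟨pofPrefs (4 * c), fun p q _ => pofPrefs_nonneg (by positivity) p q, fun πf hπf => ?_⟩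
  have hfair : 1 ≤ utility twoEdges (pofPrefs (4 * c)) πf 2 :=
    hπf.le_utility (π := Equiv.swap 1 2) (fun p => (utility_pofPrefs_eq_one _ (by decide) p).ge) 2
  have hswf := sw_pofPrefs_eq_four (4 * c) (partner_two_ne_three_of_one_le_utility hfair)
  refine ⟨by rw [hswf]; norm_num, fun πm hπm => ?_⟩
  calc c * sw twoEdges (pofPrefs (4 * c)) πf = 4 * c := by rw [hswf]; ring
    _ < 2 * (4 * c) := by linarith
    _ = sw twoEdges (pofPrefs (4 * c)) (Equiv.refl _) := (sw_pofPrefs_refl _).symm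
    _ ≤ sw twoEdges (pofPrefs (4 * c)) πm := hπm _
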